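/- arXiv:2403.02162 — 2 statements merged into one kernel-verified Lean document; each statement's English description precedes it below -/
import Mathlib

section
/- For the inelastic collision law with emission, with ω a unit vector satisfying (vᵢ-vⱼ)·ω ≠ 0 and |vᵢ-vⱼ|² > 4ε₀, one has 1 + aᵢ·(vᵢ-v'ᵢ) + aⱼ·(vⱼ-v'ⱼ) = -√(1 - 4ε₀/|vᵢ-vⱼ|²), where aᵢ = -ω/((vᵢ-vⱼ)·ω), aⱼ = ω/((vᵢ-vⱼ)·ω), v'ᵢ = (vᵢ+vⱼ)/2 - σκ, v'ⱼ = (vᵢ+vⱼ)/2 + σκ, σ = u - 2(u·ω)ω with u = (vⱼ-vᵢ)/|vⱼ-vᵢ|, and κ = √(|vᵢ-vⱼ|²/4 - ε₀). -/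
/-!
Since `v'ᵢ` and `v'ⱼ` are symmetric about the midpoint, `vⱼ - v'ⱼ = -(vᵢ - v'ᵢ)`, so the left side is
`1 - 2 ⟪ω, vᵢ - v'ᵢ⟫ / c` with `c = (vᵢ - vⱼ)·ω`. Now `vᵢ - v'ᵢ = (vᵢ - vⱼ)/2 + κσ`, and since `σ` is
the reflection of `u` in `ω^⊥` we get `ω·σ = -(u·ω) = c / |vᵢ - vⱼ|`. Hence the left side is
`-2κ / |vᵢ - vⱼ|`, which is the right side.
-/

open scoped RealInnerProductSpace

section InnerProductSpace

variable {E : Type*} [NormedAddCommGroup E] [InnerProductSpace ℝ E]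

theorem inner_sub_two_inner_smul_of_norm_eq_one {ω : E} (hω : ‖ω‖ = 1) (u : E) :
    ⟪ω, u - (2 * ⟪u, ω⟫) • ω⟫ = -⟪u, ω⟫ := by
  rw [inner_sub_right, real_inner_smul_right, real_inner_self_eq_norm_sq, hω, real_inner_comm]
  ring

theorem inner_inv_norm_smul_sub_rev (x y ω : E) :
    ⟪‖y - x‖⁻¹ • (y - x), ω⟫ = -(⟪x - y, ω⟫ / ‖x - y‖) := by
  rw [real_inner_smul_left, norm_sub_rev, ← neg_sub x y, inner_neg_left]
  ring

end InnerProductSpace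

theorem Real.sqrt_one_sub_div_sq {n : ℝ} (hn : 0 < n) (ε : ℝ) :
    √(1 - 4 * ε / n ^ 2) = 2 * √(n ^ 2 / 4 - ε) / n := by
  rw [show 1 - 4 * ε / n ^ 2 = (n ^ 2 / 4 - ε) * (2 / n) ^ 2 by field_simp; ring,
    Real.sqrt_mul' _ (by positivity), Real.sqrt_sq (by positivity)]
  ring

theorem inelastic_tc_gradient_dot_general (d : ℕ) (ε₀ : ℝ)
    (vi vj ω : EuclideanSpace ℝ (Fin d)) (hω : ‖ω‖ = 1)
    (hne : ⟪vi - vj, ω⟫ ≠ 0)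
    (u σ : EuclideanSpace ℝ (Fin d))
    (hu : u = (‖vj - vi‖)⁻¹ • (vj - vi))
    (hσ : σ = u - (2 * ⟪u, ω⟫) • ω)
    (κ : ℝ) (hκ : κ = Real.sqrt (‖vi - vj‖ ^ 2 / 4 - ε₀))
    (vi' vj' ai aj : EuclideanSpace ℝ (Fin d))
    (hvi' : vi' = (1 / 2 : ℝ) • (vi + vj) - κ • σ)
    (hvj' : vj' = (1 / 2 : ℝ) • (vi + vj) + κ • σ)
    (hai : ai = -((⟪vi - vj, ω⟫)⁻¹ • ω))
    (haj : aj = (⟪vi - vj, ω⟫)⁻¹ • ω) :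
    1 + ⟪ai, vi - vi'⟫ + ⟪aj, vj - vj'⟫
      = -Real.sqrt (1 - 4 * ε₀ / ‖vi - vj‖ ^ 2) := by
  set c := ⟪vi - vj, ω⟫
  set n := ‖vi - vj‖
  have hn : 0 < n := norm_pos_iff.2 fun h ↦ hne (by simp only [c, h, inner_zero_left])
  have hωσ : ⟪ω, σ⟫ = c / n := by
    rw [hσ, inner_sub_two_inner_smul_of_norm_eq_one hω, hu, inner_inv_norm_smul_sub_rev, neg_neg]
  have hvj_sub : vj - vj' = -(vi - vi') := by
    rw [hvi', hvj']
    module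
  have hωvi_sub : ⟪ω, vi - vi'⟫ = c / 2 + κ * (c / n) := by
    rw [hvi', show vi - ((1 / 2 : ℝ) • (vi + vj) - κ • σ) = (1 / 2 : ℝ) • (vi - vj) + κ • σ by module,
      inner_add_right, real_inner_smul_right, real_inner_smul_right, real_inner_comm, hωσ]
    ring
  calc 1 + ⟪ai, vi - vi'⟫ + ⟪aj, vj - vj'⟫ = 1 - 2 * (⟪ω, vi - vi'⟫ / c) := by
        rw [hai, haj, hvj_sub, inner_neg_left, inner_neg_right, real_inner_smul_left]
        ring
    _ = -(2 * κ / n) := by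
        rw [hωvi_sub]
        field_simp
        ring
    _ = -√(1 - 4 * ε₀ / n ^ 2) := by rw [hκ, Real.sqrt_one_sub_div_sq hn]

theorem inelastic_tc_gradient_dot (d : ℕ) (hd : 2 ≤ d) (ε₀ : ℝ) (hε : 0 < ε₀)
    (vi vj ω : EuclideanSpace ℝ (Fin d)) (hω : ‖ω‖ = 1)
    (hv : 4 * ε₀ < ‖vi - vj‖ ^ 2) (hne : ⟪vi - vj, ω⟫ ≠ 0)
    (u σ : EuclideanSpace ℝ (Fin d))
    (hu : u = (‖vj - vi‖)⁻¹ • (vj - vi))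
    (hσ : σ = u - (2 * ⟪u, ω⟫) • ω)
    (κ : ℝ) (hκ : κ = Real.sqrt (‖vi - vj‖ ^ 2 / 4 - ε₀))
    (vi' vj' ai aj : EuclideanSpace ℝ (Fin d))
    (hvi' : vi' = (1 / 2 : ℝ) • (vi + vj) - κ • σ)
    (hvj' : vj' = (1 / 2 : ℝ) • (vi + vj) + κ • σ)
    (hai : ai = -((⟪vi - vj, ω⟫)⁻¹ • ω))
    (haj : aj = (⟪vi - vj, ω⟫)⁻¹ • ω) :
    1 + ⟪ai, vi - vi'⟫ + ⟪aj, vj - vj'⟫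
      = -Real.sqrt (1 - 4 * ε₀ / ‖vi - vj‖ ^ 2) :=
  inelastic_tc_gradient_dot_general d ε₀ vi vj ω hω hne u σ hu hσ κ hκ vi' vj' ai aj hvi' hvj' hai
    haj
end

section
/- In dimension d = 2, the Jacobian determinant of the inelastic scattering map (v, v*) ↦ (v', v*') given by v' = (v+v*)/2 - σκ, v*' = (v+v*)/2 + σκ, where κ = √(|v*-v|²/4 - ε₀) and σ = u - 2(u·ω)ω with u = (v*-v)/|v*-v| and ω a fixed unit vector, has absolute value 1 at every point where |v*-v|² > 4ε₀ and (v*-v)·ω ≠ 0. -/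
/-!
With `m = (v + v*)/2` and `w = v* - v`, the map is `(m - F w, m + F w)` where
`F w = R (ρ(|w|²) • w)`, `R` is the reflection in `ω^⊥` and `ρ(t) = √(1/4 - ε₀/t)`, so that
`ρ(|w|²) |w| = κ`. Passing to and from the variables `(m, w)` multiplies the Jacobian by `2^d`,
`R` contributes `-1`, and the radial map `w ↦ ρ(|w|²) • w` has Jacobian
`ρ² + 2tρρ' = d/dt (t ρ(t)²) = d/dt (t/4 - ε₀) = 1/4` in dimension two.
The Jacobian is therefore `4 · (-1) · 1/4 = -1`.
-/

open Module
open scoped RealInnerProductSpace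

section MatrixDeterminantLemma

variable {K V : Type*} [Field K] [AddCommGroup V] [Module K V] [FiniteDimensional K V]

theorem LinearMap.det_id_add_smulRight (f : V →ₗ[K] K) (x : V) :
    LinearMap.det (LinearMap.id + f.smulRight x) = 1 + f x := by
  classical
  let b := Module.finBasis K V
  have hmat : LinearMap.toMatrix b b (LinearMap.id + f.smulRight x) =
      1 + Matrix.replicateCol Unit (b.repr x) * Matrix.replicateRow Unit (fun j => f (b j)) := by
    ext i j
    simp [LinearMap.toMatrix_apply, Matrix.one_apply, Matrix.mul_apply, Finsupp.single_apply,
      eq_comm, mul_comm]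
  rw [← LinearMap.det_toMatrix b, hmat, Matrix.det_one_add_replicateCol_mul_replicateRow]
  conv_rhs => rw [← b.sum_repr x, map_sum]
  simp [dotProduct, mul_comm]

theorem LinearMap.det_smul_id_add_smulRight {a : K} (ha : a ≠ 0) (f : V →ₗ[K] K) (x : V) :
    LinearMap.det (a • LinearMap.id + f.smulRight x) = a ^ finrank K V * (1 + a⁻¹ * f x) := by
  have : a • LinearMap.id + f.smulRight x = a • (LinearMap.id + (a⁻¹ • f).smulRight x) := by
    ext y
    simp [smul_smul, ha]
  rw [this, LinearMap.det_smul, LinearMap.det_id_add_smulRight]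
  rfl

end MatrixDeterminantLemma

section CollisionMap

variable {E : Type*} [NormedAddCommGroup E] [NormedSpace ℝ E]

noncomputable def collisionMap (F : E → E) (p : E × E) : E × E :=
  ((1 / 2 : ℝ) • (p.1 + p.2) - F (p.2 - p.1), (1 / 2 : ℝ) • (p.1 + p.2) + F (p.2 - p.1))

noncomputable def collisionMapCLM (L : E →L[ℝ] E) : E × E →L[ℝ] E × E :=
  let mid : E × E →L[ℝ] E := (1 / 2 : ℝ) • (.fst ℝ E E + .snd ℝ E E)
  let rel : E × E →L[ℝ] E := L ∘L (.snd ℝ E E - .fst ℝ E E)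
  (mid - rel).prod (mid + rel)

theorem HasFDerivAt.collisionMap {F : E → E} {L : E →L[ℝ] E} {p : E × E}
    (hF : HasFDerivAt F L (p.2 - p.1)) : HasFDerivAt (collisionMap F) (collisionMapCLM L) p := by
  have hmid : HasFDerivAt (fun q : E × E => (1 / 2 : ℝ) • (q.1 + q.2))
      ((1 / 2 : ℝ) • (.fst ℝ E E + .snd ℝ E E)) p :=
    ((1 / 2 : ℝ) • (.fst ℝ E E + .snd ℝ E E) : E × E →L[ℝ] E).hasFDerivAt
  have hrel : HasFDerivAt (fun q : E × E => F (q.2 - q.1)) (L ∘L (.snd ℝ E E - .fst ℝ E E)) p :=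
    hF.comp p (ContinuousLinearMap.snd ℝ E E - .fst ℝ E E).hasFDerivAt
  exact (hmid.sub hrel).prodMk (hmid.add hrel)

/-- `collisionMapCLM L` factors as `(a, b) ↦ (a - b, a + b)` after `((1/2) • id) × L` after
`(x, y) ↦ (x + y, y - x)`, and the two outer factors compose to `2 • id`. -/
theorem det_collisionMapCLM [FiniteDimensional ℝ E] (L : E →L[ℝ] E) :
    LinearMap.det (collisionMapCLM L : E × E →ₗ[ℝ] E × E) =
      2 ^ finrank ℝ E * LinearMap.det (L : E →ₗ[ℝ] E) := by
  let Φ : E × E →ₗ[ℝ] E × E := (LinearMap.fst ℝ E E - LinearMap.snd ℝ E E).prod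
    (LinearMap.fst ℝ E E + LinearMap.snd ℝ E E)
  let Ψ : E × E →ₗ[ℝ] E × E := (LinearMap.fst ℝ E E + LinearMap.snd ℝ E E).prod
    (LinearMap.snd ℝ E E - LinearMap.fst ℝ E E)
  have hfactor : (collisionMapCLM L : E × E →ₗ[ℝ] E × E) =
      Φ ∘ₗ ((1 / 2 : ℝ) • LinearMap.id).prodMap (L : E →ₗ[ℝ] E) ∘ₗ Ψ := rfl
  have hΦΨ : Φ ∘ₗ Ψ = (2 : ℝ) • LinearMap.id := by
    ext p <;> simp [Φ, Ψ] <;> module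
  have hdetΦΨ : LinearMap.det Φ * LinearMap.det Ψ = 2 ^ finrank ℝ E * 2 ^ finrank ℝ E := by
    rw [← LinearMap.det_comp, hΦΨ, LinearMap.det_smul, LinearMap.det_id, Module.finrank_prod,
      pow_add, mul_one]
  rw [hfactor, LinearMap.det_comp, LinearMap.det_comp, LinearMap.det_prodMap, LinearMap.det_smul,
    LinearMap.det_id]
  calc _ = LinearMap.det Φ * LinearMap.det Ψ *
        ((1 / 2) ^ finrank ℝ E * LinearMap.det (L : E →ₗ[ℝ] E)) := by ring
    _ = _ := by
      rw [hdetΦΨ, one_div_pow]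
      field_simp

end CollisionMap

section InnerProductSpace

variable {E : Type*} [NormedAddCommGroup E] [InnerProductSpace ℝ E]

theorem Submodule.reflection_orthogonal_singleton_apply {ω : E} (hω : ‖ω‖ = 1) (y : E) :
    (ℝ ∙ ω)ᗮ.reflection y = y - (2 * ⟪y, ω⟫) • ω := by
  rw [Submodule.reflection_orthogonal_apply, Submodule.reflection_singleton_apply, hω,
    real_inner_comm]
  simp only [RCLike.ofReal_one, one_pow, div_one]
  module

theorem Submodule.det_reflection_orthogonal_singleton [FiniteDimensional ℝ E] {ω : E}
    (hω : ω ≠ 0) : LinearMap.det (ℝ ∙ ω)ᗮ.reflection.toLinearMap = -1 := by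
  rw [Submodule.det_reflection, Submodule.orthogonal_orthogonal, finrank_span_singleton hω, pow_one]

theorem HasDerivAt.hasFDerivAt_smul_norm_sq {ρ : ℝ → ℝ} {ρ' : ℝ} {x : E}
    (hρ : HasDerivAt ρ ρ' (‖x‖ ^ 2)) :
    HasFDerivAt (fun y => ρ (‖y‖ ^ 2) • y)
      (ρ (‖x‖ ^ 2) • ContinuousLinearMap.id ℝ E + ((2 * ρ') • innerSL ℝ x).smulRight x) x := by
  have := (hρ.comp_hasFDerivAt x (hasStrictFDerivAt_norm_sq x).hasFDerivAt).smul (hasFDerivAt_id x)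
  convert this using 1
  · rfl
  · congr 2
    module

theorem det_smul_id_add_smulRight_innerSL [FiniteDimensional ℝ E] {a : ℝ} (ha : a ≠ 0) (c : ℝ)
    (x : E) :
    LinearMap.det ((a • ContinuousLinearMap.id ℝ E + (c • innerSL ℝ x).smulRight x : E →L[ℝ] E) :
      E →ₗ[ℝ] E) = a ^ finrank ℝ E * (1 + a⁻¹ * (c * ‖x‖ ^ 2)) := by
  have := LinearMap.det_smul_id_add_smulRight ha ((c • innerSL ℝ x : E →L[ℝ] ℝ) : E →ₗ[ℝ] ℝ) x
  simpa [real_inner_self_eq_norm_sq] using this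

end InnerProductSpace

/-- `κ / |v* - v|` as a function of `t = |v* - v|²`. -/
noncomputable def kappaRatio (ε₀ t : ℝ) : ℝ := √(1 / 4 - ε₀ / t)

section KappaRatio

variable {ε₀ t : ℝ}

theorem kappaRatio_radicand_pos (ht : 0 < t) (hεt : 4 * ε₀ < t) : 0 < 1 / 4 - ε₀ / t := by
  rw [sub_pos, div_lt_iff₀ ht]
  linarith

theorem kappaRatio_sq (ht : 0 < t) (hεt : 4 * ε₀ < t) : kappaRatio ε₀ t ^ 2 = 1 / 4 - ε₀ / t :=
  Real.sq_sqrt (kappaRatio_radicand_pos ht hεt).le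

theorem kappaRatio_pos (ht : 0 < t) (hεt : 4 * ε₀ < t) : 0 < kappaRatio ε₀ t :=
  Real.sqrt_pos.2 (kappaRatio_radicand_pos ht hεt)

theorem hasDerivAt_kappaRatio (ht : 0 < t) (hεt : 4 * ε₀ < t) :
    HasDerivAt (kappaRatio ε₀) (ε₀ / t ^ 2 / (2 * kappaRatio ε₀ t)) t := by
  have hradicand : HasDerivAt (fun s => 1 / 4 - ε₀ / s) (ε₀ / t ^ 2) t := by
    have h := ((hasDerivAt_inv ht.ne').const_mul ε₀).const_sub (1 / 4)
    simpa only [mul_neg, neg_neg, ← div_eq_mul_inv] using h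
  exact hradicand.sqrt (kappaRatio_radicand_pos ht hεt).ne'

theorem kappaRatio_jacobian (ht : 0 < t) (hεt : 4 * ε₀ < t) :
    kappaRatio ε₀ t ^ 2 *
      (1 + (kappaRatio ε₀ t)⁻¹ * (2 * (ε₀ / t ^ 2 / (2 * kappaRatio ε₀ t)) * t)) = 1 / 4 := by
  have hρ := (kappaRatio_pos ht hεt).ne'
  field_simp
  rw [kappaRatio_sq ht hεt]
  field_simp
  ring

end KappaRatio

theorem Submodule.reflection_kappaRatio_smul {E : Type*} [NormedAddCommGroup E]
    [InnerProductSpace ℝ E] {ω d : E} (hω : ‖ω‖ = 1) (hd : d ≠ 0) (ε₀ : ℝ) :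
    (ℝ ∙ ω)ᗮ.reflection (kappaRatio ε₀ (‖d‖ ^ 2) • d) =
      √(‖d‖ ^ 2 / 4 - ε₀) • (‖d‖⁻¹ • d - (2 * ⟪‖d‖⁻¹ • d, ω⟫) • ω) := by
  have hd' : ‖d‖ ≠ 0 := norm_ne_zero_iff.2 hd
  have hratio : kappaRatio ε₀ (‖d‖ ^ 2) = √(‖d‖ ^ 2 / 4 - ε₀) * ‖d‖⁻¹ := by
    rw [kappaRatio, show 1 / 4 - ε₀ / ‖d‖ ^ 2 = (‖d‖ ^ 2 / 4 - ε₀) / ‖d‖ ^ 2 by field_simp,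
      Real.sqrt_div' _ (sq_nonneg _), Real.sqrt_sq (norm_nonneg d), div_eq_mul_inv]
  rw [LinearIsometryEquiv.map_smul, Submodule.reflection_orthogonal_singleton_apply hω, hratio,
    real_inner_smul_left]
  module

theorem inelastic_scattering_jacobian_dim2_general (ε₀ : ℝ) (hε : 0 < ε₀)
    (ω : EuclideanSpace ℝ (Fin 2)) (hω : ‖ω‖ = 1)
    (S : EuclideanSpace ℝ (Fin 2) × EuclideanSpace ℝ (Fin 2) →
        EuclideanSpace ℝ (Fin 2) × EuclideanSpace ℝ (Fin 2))
    (hS : ∀ p : EuclideanSpace ℝ (Fin 2) × EuclideanSpace ℝ (Fin 2),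
      S p = ((1 / 2 : ℝ) • (p.1 + p.2) - Real.sqrt (‖p.2 - p.1‖ ^ 2 / 4 - ε₀) •
                ((‖p.2 - p.1‖)⁻¹ • (p.2 - p.1)
                  - (2 * ⟪(‖p.2 - p.1‖)⁻¹ • (p.2 - p.1), ω⟫) • ω),
            (1 / 2 : ℝ) • (p.1 + p.2) + Real.sqrt (‖p.2 - p.1‖ ^ 2 / 4 - ε₀) •
                ((‖p.2 - p.1‖)⁻¹ • (p.2 - p.1)
                  - (2 * ⟪(‖p.2 - p.1‖)⁻¹ • (p.2 - p.1), ω⟫) • ω)))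
    (v vs : EuclideanSpace ℝ (Fin 2))
    (h1 : 4 * ε₀ < ‖vs - v‖ ^ 2) :
    |LinearMap.det (fderiv ℝ S (v, vs)).toLinearMap| = 1 := by
  set t := ‖vs - v‖ ^ 2
  have ht : 0 < t := by linarith
  have hw : vs - v ≠ 0 := fun h => by simp [t, h] at ht
  let R := (ℝ ∙ ω)ᗮ.reflection
  have hR : LinearMap.det (R.toContinuousLinearEquiv :
      EuclideanSpace ℝ (Fin 2) →L[ℝ] EuclideanSpace ℝ (Fin 2)).toLinearMap = -1 :=
    Submodule.det_reflection_orthogonal_singleton (norm_ne_zero_iff.1 (hω ▸ one_ne_zero))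
  let F := fun x : EuclideanSpace ℝ (Fin 2) => R (kappaRatio ε₀ (‖x‖ ^ 2) • x)
  have hSF : S =ᶠ[nhds (v, vs)] collisionMap F := by
    filter_upwards [(continuous_snd.sub continuous_fst).continuousAt.eventually_ne hw]
      with p (hp : p.2 - p.1 ≠ 0)
    rw [hS p, collisionMap, ← Submodule.reflection_kappaRatio_smul hω hp]
  have hF := R.toContinuousLinearEquiv.hasFDerivAt.comp (vs - v)
    (hasDerivAt_kappaRatio ht h1).hasFDerivAt_smul_norm_sq
  rw [hSF.fderiv_eq, hF.collisionMap.fderiv, det_collisionMapCLM,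
    ContinuousLinearMap.toLinearMap_comp, LinearMap.det_comp,
    hR, det_smul_id_add_smulRight_innerSL (kappaRatio_pos ht h1).ne', finrank_euclideanSpace_fin,
    kappaRatio_jacobian ht h1]
  norm_num

theorem inelastic_scattering_jacobian_dim2 (ε₀ : ℝ) (hε : 0 < ε₀)
    (ω : EuclideanSpace ℝ (Fin 2)) (hω : ‖ω‖ = 1)
    (S : EuclideanSpace ℝ (Fin 2) × EuclideanSpace ℝ (Fin 2) →
        EuclideanSpace ℝ (Fin 2) × EuclideanSpace ℝ (Fin 2))
    (hS : ∀ p : EuclideanSpace ℝ (Fin 2) × EuclideanSpace ℝ (Fin 2),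
      S p = ((1 / 2 : ℝ) • (p.1 + p.2) - Real.sqrt (‖p.2 - p.1‖ ^ 2 / 4 - ε₀) •
                ((‖p.2 - p.1‖)⁻¹ • (p.2 - p.1)
                  - (2 * ⟪(‖p.2 - p.1‖)⁻¹ • (p.2 - p.1), ω⟫) • ω),
            (1 / 2 : ℝ) • (p.1 + p.2) + Real.sqrt (‖p.2 - p.1‖ ^ 2 / 4 - ε₀) •
                ((‖p.2 - p.1‖)⁻¹ • (p.2 - p.1)
                  - (2 * ⟪(‖p.2 - p.1‖)⁻¹ • (p.2 - p.1), ω⟫) • ω)))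
    (v vs : EuclideanSpace ℝ (Fin 2))
    (h1 : 4 * ε₀ < ‖vs - v‖ ^ 2) (h2 : ⟪vs - v, ω⟫ ≠ 0) :
    |LinearMap.det (fderiv ℝ S (v, vs)).toLinearMap| = 1 :=
  inelastic_scattering_jacobian_dim2_general ε₀ hε ω hω S hS v vs h1
end
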